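/- arXiv:2211.15211 — 2 statements merged into one kernel-verified Lean document; each statement's English description precedes it below -/
import Mathlib

section
/- Let n ≥ 1, let p > 1 be a real number, let α > 0, and let d ∈ ℝ^n have strictly positive entries. Define q_j = d_j^{-1/(p-1)} for j = 1,…,n and define m*_i = α^{1/p} · q_i / (∑_{j=1}^n q_j)^{1/p}. Assume α is sufficiently small, namely α^{1/p} · q_i ≤ (∑_{j=1}^n q_j)^{1/p} for every i. Then m* is an optimal solution of the problem: maximize ∑_{i=1}^n m_i over all m ∈ ℝ^n satisfying 0 ≤ m_i ≤ 1 for all i and ∑_{i=1}^n d_i m_i^p ≤ α. That is, m* satisfies 0 ≤ m*_i ≤ 1 for all i, ∑_{i=1}^n d_i (m*_i)^p ≤ α, and ∑_{i=1}^n m_i ≤ ∑_{i=1}^n m*_i for every m ∈ ℝ^n with 0 ≤ m_i ≤ 1 for all i and ∑_{i=1}^n d_i m_i^p ≤ α. -/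
/-!
With `c = (α / ∑ q)^(1/p)` we have `m* = c • q`, and `q` is chosen so that `dᵢ qᵢ^(p-1) = 1`.
Hence the gradient `p dᵢ m*ᵢ^(p-1) = p c^(p-1)` of the constraint is the same in every
coordinate, and `m*` exhausts the budget: `∑ dᵢ m*ᵢ^p = c^p ∑ q = α`. The tangent-line
inequality for the convex function `t ↦ t^p` at `m*ᵢ` then gives, for every feasible `m`,
`p c^(p-1) (∑ mᵢ - ∑ m*ᵢ) ≤ ∑ dᵢ mᵢ^p - ∑ dᵢ m*ᵢ^p ≤ α - α = 0`.
-/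

open Finset

namespace Real

theorem mul_rpow_sub_one_mul_sub_le_rpow_sub_rpow {p s t : ℝ} (hp : 1 ≤ p) (hs : 0 < s)
    (ht : 0 ≤ t) : p * s ^ (p - 1) * (t - s) ≤ t ^ p - s ^ p := by
  have hbernoulli : 1 + p * (t / s - 1) ≤ (t / s) ^ p := by
    have h := one_add_mul_self_le_rpow_one_add (s := t / s - 1)
      (by linarith [div_nonneg ht hs.le]) hp
    rwa [add_sub_cancel] at h
  have hsp : 0 < s ^ p := rpow_pos_of_pos hs p
  calc p * s ^ (p - 1) * (t - s) = s ^ p * (1 + p * (t / s - 1)) - s ^ p := by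
        rw [rpow_sub_one hs.ne']; field_simp; ring
    _ ≤ s ^ p * (t / s) ^ p - s ^ p := by gcongr
    _ = t ^ p - s ^ p := by rw [div_rpow ht hs.le]; field_simp

theorem rpow_neg_one_div_rpow {x a : ℝ} (hx : 0 ≤ x) (ha : a ≠ 0) :
    (x ^ (-(1 / a))) ^ a = x⁻¹ := by
  rw [← rpow_mul hx, neg_mul, one_div_mul_cancel ha, rpow_neg_one]

end Real

section WeightedPowerSum

variable {ι : Type*} [Fintype ι] {p μ : ℝ} {d x y : ι → ℝ}

theorem sum_mul_rpow_eq_of_mul_rpow_sub_one_eq (hx : ∀ i, x i ≠ 0)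
    (hgrad : ∀ i, d i * x i ^ (p - 1) = μ) : ∑ i, d i * x i ^ p = μ * ∑ i, x i := by
  rw [mul_sum]
  refine sum_congr rfl fun i _ => ?_
  rw [← hgrad i, Real.rpow_sub_one (hx i)]
  field_simp [hx i]

/-- Sufficiency of the Lagrange condition for maximizing `∑ xᵢ` under `∑ dᵢ xᵢ^p ≤ const`. -/
theorem sum_le_sum_of_sum_mul_rpow_le (hp : 1 ≤ p) (hμ : 0 < μ) (hd : ∀ i, 0 ≤ d i)
    (hx : ∀ i, 0 < x i) (hgrad : ∀ i, d i * x i ^ (p - 1) = μ) (hy : ∀ i, 0 ≤ y i)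
    (hbudget : ∑ i, d i * y i ^ p ≤ ∑ i, d i * x i ^ p) : ∑ i, y i ≤ ∑ i, x i := by
  have htangent : ∀ i, p * μ * (y i - x i) ≤ d i * y i ^ p - d i * x i ^ p := fun i =>
    calc p * μ * (y i - x i) = d i * (p * x i ^ (p - 1) * (y i - x i)) := by
          rw [← hgrad i]; ring
      _ ≤ d i * (y i ^ p - x i ^ p) := mul_le_mul_of_nonneg_left
        (Real.mul_rpow_sub_one_mul_sub_le_rpow_sub_rpow hp (hx i) (hy i)) (hd i)
      _ = d i * y i ^ p - d i * x i ^ p := by ring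
  have hsum : p * μ * (∑ i, y i - ∑ i, x i) ≤ 0 :=
    calc p * μ * (∑ i, y i - ∑ i, x i) = ∑ i, p * μ * (y i - x i) := by
          rw [← sum_sub_distrib, mul_sum]
      _ ≤ ∑ i, (d i * y i ^ p - d i * x i ^ p) := sum_le_sum fun i _ => htangent i
      _ ≤ 0 := by rw [sum_sub_distrib]; linarith
  exact sub_nonpos.mp (nonpos_of_mul_nonpos_right hsum (by positivity))

end WeightedPowerSum

/-- Theorem 1 of the paper: the closed-form mask
`m*_i = α^(1/p) · q_i / (∑_j q_j)^(1/p)` with `q_j = d_j^(-1/(p-1))` is an optimal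
solution of: maximize `∑ m_i` subject to `0 ≤ m ≤ 1` and `∑ d_i m_i^p ≤ α`,
provided `α` is small enough that the box constraint holds. -/
theorem optimal_mask_closed_form
    (n : ℕ) (hn : 1 ≤ n) (p α : ℝ) (hp : 1 < p) (hα : 0 < α)
    (d : Fin n → ℝ) (hd : ∀ i, 0 < d i)
    (q : Fin n → ℝ) (hq : ∀ j, q j = (d j) ^ (-(1 / (p - 1))))
    (mstar : Fin n → ℝ)
    (hmstar : ∀ i, mstar i = α ^ (1 / p) * q i / (∑ j, q j) ^ (1 / p))
    (hsmall : ∀ i, α ^ (1 / p) * q i ≤ (∑ j, q j) ^ (1 / p)) :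
    (∀ i, 0 ≤ mstar i ∧ mstar i ≤ 1) ∧
      (∑ i, d i * mstar i ^ p ≤ α) ∧
      (∀ m : Fin n → ℝ, (∀ i, 0 ≤ m i ∧ m i ≤ 1) →
        (∑ i, d i * m i ^ p ≤ α) → ∑ i, m i ≤ ∑ i, mstar i) := by
  have hqpos : ∀ j, 0 < q j := fun j => hq j ▸ Real.rpow_pos_of_pos (hd j) _
  set Q := ∑ j, q j
  have hQ : 0 < Q := sum_pos (fun j _ => hqpos j) ⟨⟨0, hn⟩, mem_univ _⟩
  set c := (α / Q) ^ (1 / p) with hc_def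
  have hc : 0 < c := by positivity
  have hmstar_eq : ∀ i, mstar i = c * q i := fun i => by
    rw [hmstar, hc_def, Real.div_rpow hα.le hQ.le]; ring
  have hmstar_pos : ∀ i, 0 < mstar i := fun i => hmstar_eq i ▸ mul_pos hc (hqpos i)
  have hgrad : ∀ i, d i * mstar i ^ (p - 1) = c ^ (p - 1) := fun i => by
    rw [hmstar_eq, Real.mul_rpow hc.le (hqpos i).le, hq,
      Real.rpow_neg_one_div_rpow (hd i).le (by linarith), mul_left_comm,
      mul_inv_cancel₀ (hd i).ne', mul_one]
  have hcp : c ^ p = α / Q := by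
    rw [hc_def, ← Real.rpow_mul (by positivity), one_div_mul_cancel (by positivity), Real.rpow_one]
  have hcost : ∑ i, d i * mstar i ^ p = α :=
    calc ∑ i, d i * mstar i ^ p = c ^ (p - 1) * (c * Q) := by
          rw [sum_mul_rpow_eq_of_mul_rpow_sub_one_eq (fun i => (hmstar_pos i).ne') hgrad,
            sum_congr rfl fun i _ => hmstar_eq i, ← mul_sum]
      _ = c ^ p * Q := by rw [Real.rpow_sub_one hc.ne']; field_simp
      _ = α := by rw [hcp]; field_simp
  refine ⟨fun i => ⟨(hmstar_pos i).le, ?_⟩, hcost.le, fun m hm hbudget => ?_⟩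
  · rw [hmstar, div_le_one (by positivity)]
    exact hsmall i
  · exact sum_le_sum_of_sum_mul_rpow_le hp.le (by positivity) (fun i => (hd i).le) hmstar_pos
      hgrad (fun i => (hm i).1) (hbudget.trans hcost.ge)
end

section
/- Let n ≥ 1, let α > 0, and let d ∈ ℝ^n have strictly positive entries. Suppose d* > 0 satisfies ∑_{i : d_i < d*} d_i = α, and let S = {i : d_i < d*} with k = |S|. Then for every m ∈ ℝ^n with 0 ≤ m_i ≤ 1 for all i and ∑_{i=1}^n d_i m_i ≤ α, one has ∑_{i=1}^n m_i ≤ k. -/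
open Finset
open scoped Classical

/-- Upper-bound half of Theorem 2 of the paper (Appendix): if the threshold `d*`
satisfies `∑_{i : d_i < d*} d_i = α` and `k` is the number of indices below the
threshold, then every feasible mask (`0 ≤ m ≤ 1`, `∑ d_i m_i ≤ α`) has
`∑ m_i ≤ k`. -/
theorem binary_mask_objective_bound
    (n : ℕ) (hn : 1 ≤ n) (α : ℝ) (hα : 0 < α)
    (d : Fin n → ℝ) (hd : ∀ i, 0 < d i)
    (dstar : ℝ) (hdstar : 0 < dstar)
    (hthr : ∑ i ∈ Finset.univ.filter (fun i => d i < dstar), d i = α)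
    (k : ℕ) (hk : k = (Finset.univ.filter (fun i => d i < dstar)).card) :
    ∀ m : Fin n → ℝ, (∀ i, 0 ≤ m i ∧ m i ≤ 1) →
      (∑ i, d i * m i ≤ α) → ∑ i, m i ≤ k := by
  intro m hm hsum
  set S := Finset.univ.filter (fun i => d i < dstar) with hS
  have hsplit := Finset.sum_filter_add_sum_filter_not Finset.univ
    (fun i => d i < dstar) (fun i => dstar * m i)
  have h1 : ∑ i ∈ S, dstar * m i ≤ ∑ i ∈ S, (d i * m i - d i + dstar) := by
    apply Finset.sum_le_sum
    intro i hi
    have hi' : d i < dstar := (Finset.mem_filter.mp hi).2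
    nlinarith [(hm i).1, (hm i).2]
  have h2 : ∑ i ∈ Finset.univ.filter (fun i => ¬ d i < dstar), dstar * m i
      ≤ ∑ i ∈ Finset.univ.filter (fun i => ¬ d i < dstar), d i * m i := by
    apply Finset.sum_le_sum
    intro i hi
    have hi' : dstar ≤ d i := not_lt.mp (Finset.mem_filter.mp hi).2
    nlinarith [(hm i).1]
  have hS2 : ∑ i ∈ S, (d i * m i - d i + dstar)
      = ∑ i ∈ S, d i * m i - α + dstar * k := by
    rw [Finset.sum_add_distrib, Finset.sum_sub_distrib, Finset.sum_const, hk, hS, hthr]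
    ring_nf
  have hall : ∑ i, dstar * m i ≤ ∑ i, d i * m i - α + dstar * k := by
    rw [← hsplit, ← Finset.sum_filter_add_sum_filter_not Finset.univ
      (fun i => d i < dstar) (fun i => d i * m i)]
    have := h1.trans_eq hS2
    linarith
  have hfin : dstar * ∑ i, m i ≤ dstar * k := by
    rw [Finset.mul_sum]
    linarith
  exact le_of_mul_le_mul_left hfin hdstar
end
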